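/- Let F ⊆ 2^[n] be B_d-free, and for 0 ≤ a ≤ b ≤ n let F(a,b) = {A ∈ F : a ≤ |A| ≤ b}. Then h_n(F(a,b)) ≤ α_d(b-a), provided b - a ≥ d, where α_d is defined by α_1(n)=1 and α_{d+1}(n)=1/2+sqrt(2n·α_d(n)+1/4). -/

import Mathlib

/-- The Lubell function of a family of subsets of `[n]`. -/
noncomputable def lubell (n : ℕ) (F : Finset (Finset (Fin n))) : ℝ :=
  ∑ A ∈ F, 1 / (n.choose A.card : ℝ)

/-- `F` contains a `d`-dimensional Boolean algebra: there are pairwise disjoint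
`X₀, X₁, …, X_d` with `X₁, …, X_d` nonempty such that every union
`X₀ ∪ ⋃_{i ∈ I} X_i` belongs to `F`. -/
def ContainsBD (n d : ℕ) (F : Finset (Finset (Fin n))) : Prop :=
  ∃ (X₀ : Finset (Fin n)) (X : Fin d → Finset (Fin n)),
    (∀ i, (X i).Nonempty) ∧
    (∀ i, Disjoint X₀ (X i)) ∧
    (∀ i j, i ≠ j → Disjoint (X i) (X j)) ∧
    ∀ I : Finset (Fin d), X₀ ∪ I.biUnion X ∈ F

noncomputable def alpha (n : ℕ) : ℕ → ℝ
  | 0 => 1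
  | 1 => 1
  | (d + 2) => 1 / 2 + Real.sqrt (2 * n * alpha n (d + 1) + 1 / 4)

open Finset
open scoped Nat

/-!
Averaging over the intervals `[A₀, B₀]` with `|A₀| = a`, `|B₀| = b` reduces the band to the Boolean
lattice of subsets of a `(b - a)`-set. There, `h_m(F) ≤ α_d(m)` holds for `B_d`-free families on
any `m`-element ground set, by induction on `d`; the case `d = 1` is the LYM inequality.

For the inductive step, let `f(σ)` be the number of members of `F` on a maximal chain `σ`. Its mean
over all chains is `h = h_m(F)`. Its second moment is `h` plus twice the contribution of the pairs
`A ⊂ B` in `F`; grouped by `Z = B \ A ≠ ∅`, this is a weighted sum of the Lubell functions, inside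
the complement of `Z`, of the links `{A ∈ F | A ∩ Z = ∅, A ∪ Z ∈ F}`, which are `B_d`-free.
Cauchy–Schwarz then gives `h² - h ≤ 2 m α_d(m)`, that is, `h ≤ α_{d+1}(m)`.
-/

lemma alpha_succ (n : ℕ) {d : ℕ} (hd : 1 ≤ d) :
    alpha n (d + 1) = 1 / 2 + Real.sqrt (2 * n * alpha n d + 1 / 4) := by
  obtain ⟨e, rfl⟩ := Nat.exists_eq_add_of_le' hd
  rfl

lemma alpha_nonneg (n : ℕ) : ∀ d, 0 ≤ alpha n d
  | 0 | 1 => zero_le_one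
  | d + 2 => by rw [alpha]; positivity

lemma alpha_mono {n n' : ℕ} (h : n ≤ n') : ∀ d, alpha n d ≤ alpha n' d
  | 0 | 1 => le_rfl
  | d + 2 => by
    have := alpha_nonneg n (d + 1)
    rw [alpha, alpha]
    gcongr
    exact alpha_mono h (d + 1)

lemma le_alpha_succ_of_sq_sub_le {n d : ℕ} (hd : 1 ≤ d) {h : ℝ}
    (hq : h ^ 2 - h ≤ 2 * n * alpha n d) : h ≤ alpha n (d + 1) := by
  rw [alpha_succ n hd, ← sub_le_iff_le_add']
  apply Real.le_sqrt_of_sq_le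
  linarith

variable {α : Type*}

noncomputable def lubellSum [Fintype α] (F : Finset (Finset α)) : ℝ :=
  ∑ A ∈ F, ((Fintype.card α).choose #A : ℝ)⁻¹

lemma lubellSum_univ [Fintype α] :
    lubellSum (univ : Finset (Finset α)) = Fintype.card α + 1 := by
  rw [lubellSum, ← powerset_univ,
    sum_powerset_apply_card fun k => ((Fintype.card α).choose k : ℝ)⁻¹, card_univ]
  have : ∀ k ∈ range (Fintype.card α + 1),
      (Fintype.card α).choose k • ((Fintype.card α).choose k : ℝ)⁻¹ = 1 := fun k hk => by
    rw [nsmul_eq_mul, mul_inv_cancel₀]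
    exact_mod_cast (Nat.choose_pos (Nat.lt_succ_iff.1 (mem_range.1 hk))).ne'
  rw [sum_congr rfl this]
  simp

lemma sum_inv_choose_card_nonempty [Fintype α] :
    ∑ Z : Finset α with Z.Nonempty, ((Fintype.card α).choose #Z : ℝ)⁻¹ = Fintype.card α := by
  classical
  have := lubellSum_univ (α := α)
  rw [lubellSum, ← sum_filter_add_sum_filter_not _ Finset.Nonempty] at this
  simpa [not_nonempty_iff_eq_empty, filter_eq'] using this

section BooleanAlgebra

variable [DecidableEq α]

/-- `ContainsBD n d F` is `ContainsBoolAlg d F` with ground type `Fin n`. -/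
def ContainsBoolAlg (d : ℕ) (F : Finset (Finset α)) : Prop :=
  ∃ (X₀ : Finset α) (X : Fin d → Finset α),
    (∀ i, (X i).Nonempty) ∧
    (∀ i, Disjoint X₀ (X i)) ∧
    (∀ i j, i ≠ j → Disjoint (X i) (X j)) ∧
    ∀ I : Finset (Fin d), X₀ ∪ I.biUnion X ∈ F

lemma isAntichain_of_not_containsBoolAlg_one {F : Finset (Finset α)}
    (hF : ¬ ContainsBoolAlg 1 F) : IsAntichain (· ⊆ ·) (F : Set (Finset α)) := by
  intro A hA B hB hne hAB
  refine hF ⟨A, fun _ => B \ A, fun _ => sdiff_nonempty.2 fun h => hne (hAB.antisymm h),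
    fun _ => disjoint_sdiff, fun i j hij => (hij (Subsingleton.elim i j)).elim, fun I => ?_⟩
  rcases I.eq_empty_or_nonempty with rfl | ⟨i, hi⟩
  · simpa using hA
  · have : I.biUnion (fun _ => B \ A) = B \ A := by
      ext x; simp [Subsingleton.elim i 0 ▸ hi]
    rwa [this, union_sdiff_of_subset hAB]

def link (F : Finset (Finset α)) (Z : Finset α) : Finset (Finset α) :=
  F.filter fun A => Disjoint A Z ∧ A ∪ Z ∈ F

lemma biUnion_snoc {d : ℕ} (I : Finset (Fin (d + 1))) (X : Fin d → Finset α) (Z : Finset α) :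
    I.biUnion (Fin.snoc X Z) =
      ({i | Fin.castSucc i ∈ I} : Finset (Fin d)).biUnion X ∪
        if Fin.last d ∈ I then Z else ∅ := by
  ext x
  split_ifs <;> simp [Fin.exists_fin_succ', *]

lemma ContainsBoolAlg.of_link {d : ℕ} {F : Finset (Finset α)} {Z : Finset α} (hZ : Z.Nonempty)
    (h : ContainsBoolAlg d (link F Z)) : ContainsBoolAlg (d + 1) F := by
  obtain ⟨X₀, X, hne, hX₀, hX, hmem⟩ := h
  simp only [link, mem_filter] at hmem
  have hX₀Z : Disjoint X₀ Z := by simpa using (hmem ∅).2.1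
  have hXZ : ∀ i, Disjoint (X i) Z := fun i => by
    simpa using (disjoint_union_left.1 (hmem {i}).2.1).2
  refine ⟨X₀, Fin.snoc X Z, ?_, ?_, ?_, fun I => ?_⟩
  · simpa [Fin.forall_fin_succ'] using ⟨hne, hZ⟩
  · simpa [Fin.forall_fin_succ'] using ⟨hX₀, hX₀Z⟩
  · simp only [Fin.forall_fin_succ', Fin.snoc_castSucc, Fin.snoc_last, ne_eq, Fin.castSucc_inj]
    refine ⟨fun i => ⟨fun j => hX i j, fun _ => hXZ i⟩, fun j _ => (hXZ j).symm, by simp⟩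
  · rw [biUnion_snoc, ← union_assoc]
    split_ifs
    · exact (hmem _).2.2
    · simpa using (hmem _).1

/-- The members of `F` in the interval `[A₀, B₀]`, as subsets of `B₀ \ A₀` (by removing `A₀`). -/
def intervalTrace (F : Finset (Finset α)) (A₀ B₀ : Finset α) : Finset (Finset ↥(B₀ \ A₀)) :=
  {X | A₀ ∪ X.map (Function.Embedding.subtype _) ∈ F}

lemma disjoint_map_subtype_sdiff {A₀ B₀ : Finset α} (X : Finset ↥(B₀ \ A₀)) :
    Disjoint A₀ (X.map (Function.Embedding.subtype _)) :=
  disjoint_left.2 fun _ hx hxX => (mem_sdiff.1 (property_of_mem_map_subtype X hxX)).2 hx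

lemma ContainsBoolAlg.of_intervalTrace {d : ℕ} {F : Finset (Finset α)} {A₀ B₀ : Finset α}
    (h : ContainsBoolAlg d (intervalTrace F A₀ B₀)) : ContainsBoolAlg d F := by
  obtain ⟨Y₀, Y, hne, hY₀, hY, hmem⟩ := h
  refine ⟨A₀ ∪ Y₀.map (Function.Embedding.subtype _),
    fun i => (Y i).map (Function.Embedding.subtype _), fun i => (hne i).map,
    fun i => disjoint_union_left.2 ⟨disjoint_map_subtype_sdiff _, (disjoint_map _).2 (hY₀ i)⟩,
    fun i j hij => (disjoint_map _).2 (hY i j hij), fun I => ?_⟩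
  simpa [intervalTrace, map_eq_image, image_union, biUnion_image, union_assoc] using hmem I

lemma lubellSum_intervalTrace {F : Finset (Finset α)} {A₀ B₀ : Finset α} (h : A₀ ⊆ B₀) :
    lubellSum (intervalTrace F A₀ B₀) =
      ∑ A ∈ F with A₀ ⊆ A ∧ A ⊆ B₀, ((#B₀ - #A₀).choose (#A - #A₀) : ℝ)⁻¹ := by
  set e := Function.Embedding.subtype (· ∈ B₀ \ A₀)
  have hsec : ∀ A, A₀ ⊆ A → A ⊆ B₀ → A₀ ∪ ((A \ A₀).subtype (· ∈ B₀ \ A₀)).map e = A :=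
    fun A hA₀ hB₀ => by
      rw [subtype_map_of_mem fun x hx => sdiff_subset_sdiff hB₀ subset_rfl hx,
        union_sdiff_of_subset hA₀]
  rw [lubellSum, Fintype.card_coe, card_sdiff_of_subset h]
  refine sum_nbij' (fun X => A₀ ∪ X.map e) (fun A => (A \ A₀).subtype (· ∈ B₀ \ A₀))
    (fun X hX => ?_) (fun A hA => ?_) (fun X _ => ?_) (fun A hA => ?_) (fun X _ => ?_)
  · rw [intervalTrace, mem_filter] at hX
    refine mem_filter.2 ⟨hX.2, subset_union_left, union_subset h fun x hx => ?_⟩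
    exact sdiff_subset (property_of_mem_map_subtype X hx)
  · rw [mem_filter] at hA
    rw [intervalTrace, mem_filter, hsec A hA.2.1 hA.2.2]
    exact ⟨mem_univ _, hA.1⟩
  · ext x
    have := (mem_sdiff.1 x.2).2
    simp only [mem_subtype, mem_sdiff, mem_union, mem_map, Function.Embedding.subtype_apply,
      SetLike.coe_eq_coe, exists_eq_right, e]
    tauto
  · exact hsec A (mem_filter.1 hA).2.1 (mem_filter.1 hA).2.2
  · rw [card_union_of_disjoint (disjoint_map_subtype_sdiff X), card_map, Nat.add_sub_cancel_left]

end BooleanAlgebra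

lemma card_equiv_comp_eq {β ι : Type*} [Fintype α] [DecidableEq α] [Fintype β] [DecidableEq β]
    [Fintype ι] [DecidableEq ι] (f : α → ι) (g : β → ι)
    (h : ∀ i, #{a | f a = i} = #{b | g b = i}) :
    #{σ : α ≃ β | ∀ a, g (σ a) = f a} = ∏ i, (#{a | f a = i})! := by
  let e : {σ : α ≃ β // ∀ a, g (σ a) = f a} ≃ ∀ i, {a // f a = i} ≃ {b // g b = i} :=
    { toFun σ i := σ.1.subtypeEquiv fun a => by rw [σ.2 a]
      invFun e := ⟨Equiv.ofFiberEquiv e, Equiv.ofFiberEquiv_map e⟩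
      left_inv σ := by ext a; rfl
      right_inv e := by funext i; ext ⟨a, rfl⟩; rfl }
  rw [← Fintype.card_subtype, Fintype.card_congr e, Fintype.card_pi]
  refine prod_congr rfl fun i _ => ?_
  rw [Fintype.card_equiv (Fintype.equivOfCardEq _), Fintype.card_subtype]
  simpa only [Fintype.card_subtype] using h i

section Chains

variable [Fintype α]

/-- A maximal chain is encoded by a bijection `σ : α ≃ Fin |α|`; its members are the preimages
of the initial segments `{0, …, k - 1}`. -/
def IsOnChain (σ : α ≃ Fin (Fintype.card α)) (A : Finset α) : Prop :=
  ∀ x, x ∈ A ↔ (σ x : ℕ) < #A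

lemma IsOnChain.subset {σ : α ≃ Fin (Fintype.card α)} {A B : Finset α} (hA : IsOnChain σ A)
    (hB : IsOnChain σ B) (h : #A ≤ #B) : A ⊆ B :=
  fun x hx => (hB x).2 (((hA x).1 hx).trans_le h)

variable [DecidableEq α]

instance (σ : α ≃ Fin (Fintype.card α)) : DecidablePred (IsOnChain σ) := fun _ => by
  unfold IsOnChain; infer_instance

def chainsThrough (A B : Finset α) : Finset (α ≃ Fin (Fintype.card α)) :=
  {σ | IsOnChain σ A ∧ IsOnChain σ B}

lemma card_filter_decide_mem_eq {A B : Finset α} (hAB : A ⊆ B) :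
    ∀ c : Bool × Bool, #{x | (decide (x ∈ A), decide (x ∈ B)) = c} =
      match c with
      | (true, true) => #A
      | (true, false) => 0
      | (false, true) => #B - #A
      | (false, false) => Fintype.card α - #B
  | (true, true) => by
    simp only [Prod.mk.injEq, decide_eq_true_eq]
    rw [filter_congr fun x _ => and_iff_left_of_imp (@hAB x), filter_univ_mem]
  | (true, false) => by
    simpa using fun x hx => hAB hx
  | (false, true) => by
    simp only [Prod.mk.injEq, decide_eq_false_iff_not, decide_eq_true_eq]
    rw [← card_sdiff_of_subset hAB]
    congr 1; ext; simp [and_comm]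
  | (false, false) => by
    simp only [Prod.mk.injEq, decide_eq_false_iff_not]
    rw [← card_compl]
    congr 1; ext
    simp only [mem_filter, mem_univ, true_and, mem_compl, and_iff_right_iff_imp]
    exact fun h h' => h (hAB h')

lemma card_chainsThrough {A B : Finset α} (hAB : A ⊆ B) :
    #(chainsThrough A B) = (#A)! * (#B - #A)! * (Fintype.card α - #B)! := by
  set A' : Finset (Fin (Fintype.card α)) := {i | i < #A}
  set B' : Finset (Fin (Fintype.card α)) := {i | i < #B}
  have hA' : #A' = #A := by simp [A', Fin.card_filter_val_lt, card_le_univ]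
  have hB' : #B' = #B := by simp [B', Fin.card_filter_val_lt, card_le_univ]
  have hAB' : A' ⊆ B' := fun i hi => by
    simp only [A', B', mem_filter] at hi ⊢
    exact ⟨hi.1, hi.2.trans_le (card_le_card hAB)⟩
  have hiff : ∀ σ : α ≃ Fin (Fintype.card α), IsOnChain σ A ∧ IsOnChain σ B ↔
      ∀ x, (decide (σ x ∈ A'), decide (σ x ∈ B')) = (decide (x ∈ A), decide (x ∈ B)) := by
    simp [A', B', IsOnChain, forall_and, iff_comm]
  rw [chainsThrough, filter_congr fun σ _ => hiff σ,
    card_equiv_comp_eq (fun x => (decide (x ∈ A), decide (x ∈ B)))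
      (fun i => (decide (i ∈ A'), decide (i ∈ B'))) fun c => ?_]
  · simp [Fintype.prod_prod_type, card_filter_decide_mem_eq hAB, mul_assoc]
  · rw [card_filter_decide_mem_eq hAB, card_filter_decide_mem_eq hAB', hA', hB', Fintype.card_fin]

lemma card_chainsThrough_union {A Z : Finset α} (h : Disjoint A Z) :
    (#(chainsThrough A (A ∪ Z)) : ℝ) =
      (Fintype.card α)! * (((Fintype.card α).choose #Z : ℝ)⁻¹ *
        ((Fintype.card α - #Z).choose #A : ℝ)⁻¹) := by
  have hle : #A + #Z ≤ Fintype.card α := card_union_of_disjoint h ▸ card_le_univ _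
  have hZ := Nat.choose_mul_factorial_mul_factorial (n := Fintype.card α) (k := #Z) (by omega)
  have hA := Nat.choose_mul_factorial_mul_factorial (n := Fintype.card α - #Z) (k := #A) (by omega)
  rw [card_chainsThrough subset_union_left, card_union_of_disjoint h, Nat.add_sub_cancel_left,
    ← hZ, ← hA, show Fintype.card α - #Z - #A = Fintype.card α - (#A + #Z) by omega]
  have h1 : ((Fintype.card α).choose #Z : ℝ) ≠ 0 := by
    exact_mod_cast (Nat.choose_pos (by omega)).ne'
  have h2 : ((Fintype.card α - #Z).choose #A : ℝ) ≠ 0 := by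
    exact_mod_cast (Nat.choose_pos (by omega)).ne'
  push_cast
  field_simp

lemma sum_card_chainsThrough_self (F : Finset (Finset α)) :
    ∑ A ∈ F, (#(chainsThrough A A) : ℝ) = (Fintype.card α)! * lubellSum F := by
  rw [lubellSum, mul_sum]
  refine sum_congr rfl fun A _ => ?_
  simpa using card_chainsThrough_union (disjoint_empty_right A)

lemma sum_card_filter_isOnChain (F : Finset (Finset α)) :
    ∑ σ : α ≃ Fin (Fintype.card α), #{A ∈ F | IsOnChain σ A} =
      ∑ A ∈ F, #(chainsThrough A A) := by
  simp only [chainsThrough, and_self]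
  exact sum_card_bipartiteAbove_eq_sum_card_bipartiteBelow _

lemma sum_sq_card_filter_isOnChain (F : Finset (Finset α)) :
    ∑ σ : α ≃ Fin (Fintype.card α), #{A ∈ F | IsOnChain σ A} ^ 2 =
      ∑ A ∈ F, ∑ B ∈ F, #(chainsThrough A B) := by
  simp_rw [sq, ← card_product, ← filter_product, ← sum_product']
  exact sum_card_bipartiteAbove_eq_sum_card_bipartiteBelow _

lemma sum_sum_card_chainsThrough (F : Finset (Finset α)) :
    ∑ A ∈ F, ∑ B ∈ F, #(chainsThrough A B) =
      ∑ A ∈ F, #(chainsThrough A A) + 2 * ∑ A ∈ F, ∑ B ∈ F with A ⊂ B, #(chainsThrough A B) := by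
  have hsplit : ∀ A B : Finset α, #(chainsThrough A B) =
      (if A = B then #(chainsThrough A A) else 0) +
      (if A ⊂ B then #(chainsThrough A B) else 0) +
      (if B ⊂ A then #(chainsThrough B A) else 0) := fun A B => by
    obtain rfl | hne := eq_or_ne A B
    · simp
    by_cases hAB : A ⊂ B
    · simp [hne, hAB, asymm hAB]
    by_cases hBA : B ⊂ A
    · simp [hne, hAB, hBA, chainsThrough, and_comm]
    simp only [hne, hAB, hBA, if_false, add_zero, chainsThrough, card_eq_zero,
      filter_eq_empty_iff]
    rintro σ - ⟨hA, hB⟩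
    rcases le_total #A #B with h | h
    · exact hAB ((hA.subset hB h).ssubset_of_ne hne)
    · exact hBA ((hB.subset hA h).ssubset_of_ne hne.symm)
  rw [sum_congr rfl fun A _ => sum_congr rfl fun B _ => hsplit A B]
  simp only [sum_add_distrib]
  rw [sum_comm (s := F) (f := fun A B => if B ⊂ A then #(chainsThrough B A) else 0)]
  simp only [sum_ite_eq, ← sum_filter, filter_mem_eq_inter, inter_self]
  ring

lemma sum_sum_ssubset_eq_sum_link {M : Type*} [AddCommMonoid M] (F : Finset (Finset α))
    (g : Finset α → Finset α → M) :
    ∑ A ∈ F, ∑ B ∈ F with A ⊂ B, g A B =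
      ∑ Z : Finset α with Z.Nonempty, ∑ A ∈ link F Z, g A (A ∪ Z) := by
  have h : ∀ A ∈ F, ∑ B ∈ F with A ⊂ B, g A B =
      ∑ Z : Finset α with Z.Nonempty ∧ Disjoint A Z ∧ A ∪ Z ∈ F, g A (A ∪ Z) := fun A _ => by
    refine sum_nbij' (· \ A) (A ∪ ·) (fun B hB => ?_) (fun Z hZ => ?_) (fun B hB => ?_)
      (fun Z hZ => ?_) (fun B hB => ?_)
    · simp only [mem_filter] at hB
      simp only [mem_filter, mem_univ, true_and, disjoint_sdiff, union_sdiff_of_subset hB.2.1]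
      exact ⟨sdiff_nonempty.2 (not_subset_of_ssubset hB.2), hB.1⟩
    · simp only [mem_filter, mem_univ, true_and] at hZ
      refine mem_filter.2 ⟨hZ.2.2, Finset.ssubset_iff_subset_ne.2 ⟨subset_union_left, fun h => ?_⟩⟩
      obtain ⟨z, hz⟩ := hZ.1
      exact disjoint_left.1 hZ.2.1 (h ▸ mem_union_right A hz) hz
    · exact union_sdiff_of_subset (mem_filter.1 hB).2.1
    · exact union_sdiff_cancel_left (mem_filter.1 hZ).2.2.1
    · rw [union_sdiff_of_subset (mem_filter.1 hB).2.1]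
  rw [sum_congr rfl h]
  refine sum_comm' fun A Z => ?_
  simp only [mem_filter, mem_univ, true_and, link]
  tauto

lemma lubellSum_sq_sub_le {F : Finset (Finset α)} {c : ℝ}
    (hlink : ∀ Z : Finset α, Z.Nonempty →
      ∑ A ∈ link F Z, ((Fintype.card α - #Z).choose #A : ℝ)⁻¹ ≤ c) :
    lubellSum F ^ 2 - lubellSum F ≤ 2 * Fintype.card α * c := by
  let f : (α ≃ Fin (Fintype.card α)) → ℝ := fun σ => #{A ∈ F | IsOnChain σ A}
  have hfirst : ∑ σ, f σ = (Fintype.card α)! * lubellSum F := by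
    rw [← sum_card_chainsThrough_self]
    simp only [f]
    exact_mod_cast sum_card_filter_isOnChain F
  have hpairs : ∑ Z : Finset α with Z.Nonempty, ∑ A ∈ link F Z, (#(chainsThrough A (A ∪ Z)) : ℝ)
      ≤ (Fintype.card α)! * (Fintype.card α * c) := by
    rw [← sum_inv_choose_card_nonempty, sum_mul, mul_sum]
    refine sum_le_sum fun Z hZ => ?_
    rw [sum_congr rfl fun A hA => card_chainsThrough_union (mem_filter.1 hA).2.1, ← mul_sum,
      ← mul_sum]
    gcongr
    exact hlink Z (mem_filter.1 hZ).2
  have hsecond : ∑ σ, f σ ^ 2 ≤ (Fintype.card α)! * (lubellSum F + 2 * Fintype.card α * c) := by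
    have h : ∑ σ, f σ ^ 2 = ∑ A ∈ F, (#(chainsThrough A A) : ℝ) +
        2 * ∑ Z : Finset α with Z.Nonempty, ∑ A ∈ link F Z, (#(chainsThrough A (A ∪ Z)) : ℝ) := by
      rw [← sum_sum_ssubset_eq_sum_link F fun A B => (#(chainsThrough A B) : ℝ)]
      simp only [f]
      exact_mod_cast (sum_sq_card_filter_isOnChain F).trans (sum_sum_card_chainsThrough F)
    rw [h, sum_card_chainsThrough_self]
    linarith
  have hcs : (∑ σ, f σ) ^ 2 ≤ (Fintype.card α)! * ∑ σ, f σ ^ 2 := by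
    simpa [Fintype.card_equiv (Fintype.equivFin α)] using
      sq_sum_le_card_mul_sum_sq (s := univ) (f := f)
  rw [hfirst] at hcs
  have hm : (0 : ℝ) < (Fintype.card α)! := by positivity
  have : ((Fintype.card α)! : ℝ) ^ 2 * lubellSum F ^ 2 ≤
      ((Fintype.card α)! : ℝ) ^ 2 * (lubellSum F + 2 * Fintype.card α * c) := by
    nlinarith
  nlinarith [le_of_mul_le_mul_left this (by positivity)]

end Chains

theorem lubellSum_le_alpha {d : ℕ} (hd : 1 ≤ d) [Fintype α] [DecidableEq α]
    {F : Finset (Finset α)} (hF : ¬ ContainsBoolAlg d F) :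
    lubellSum F ≤ alpha (Fintype.card α) d := by
  induction d, hd using Nat.le_induction generalizing α with
  | base =>
    simpa [alpha, lubellSum] using lubell_yamamoto_meshalkin_inequality_sum_inv_choose (𝕜 := ℝ)
      (isAntichain_of_not_containsBoolAlg_one hF)
  | succ d hd ih =>
    refine le_alpha_succ_of_sq_sub_le hd (lubellSum_sq_sub_le fun Z hZ => ?_)
    calc ∑ A ∈ link F Z, ((Fintype.card α - #Z).choose #A : ℝ)⁻¹
        = lubellSum (intervalTrace (link F Z) ∅ Zᶜ) := by
          rw [lubellSum_intervalTrace (empty_subset _), card_compl,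
            filter_true_of_mem fun A hA => ⟨empty_subset A,
              subset_compl_iff_disjoint_right.2 (mem_filter.1 hA).2.1⟩]
          simp
      _ ≤ alpha (Fintype.card ↥(Zᶜ \ ∅)) d :=
          ih fun h => hF (h.of_intervalTrace.of_link hZ)
      _ ≤ alpha (Fintype.card α) d := alpha_mono (Fintype.card_subtype_le _) d

lemma sum_interval_le_alpha [DecidableEq α] {d : ℕ} (hd : 1 ≤ d) {F : Finset (Finset α)}
    (hF : ¬ ContainsBoolAlg d F) {A₀ B₀ : Finset α} (h : A₀ ⊆ B₀) :
    ∑ A ∈ F with A₀ ⊆ A ∧ A ⊆ B₀, ((#B₀ - #A₀).choose (#A - #A₀) : ℝ)⁻¹ ≤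
      alpha (#B₀ - #A₀) d := by
  rw [← lubellSum_intervalTrace h, ← card_sdiff_of_subset h, ← Fintype.card_coe]
  exact lubellSum_le_alpha hd fun h => hF h.of_intervalTrace

lemma choose_mul_choose_mul_inv_choose {n a k b : ℕ} (hak : a ≤ k) (hkb : k ≤ b) (hbn : b ≤ n) :
    (k.choose a * (n - k).choose (b - k) : ℝ) * ((b - a).choose (k - a) : ℝ)⁻¹ =
      n.choose b * b.choose a * (n.choose k : ℝ)⁻¹ := by
  have h1 : (n.choose b * b.choose k : ℝ) = n.choose k * (n - k).choose (b - k) := by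
    exact_mod_cast Nat.choose_mul hkb
  have h2 : (b.choose k * k.choose a : ℝ) = b.choose a * (b - a).choose (k - a) := by
    exact_mod_cast Nat.choose_mul hak
  have h3 : (n.choose k : ℝ) ≠ 0 := by exact_mod_cast (Nat.choose_pos (hkb.trans hbn)).ne'
  have h4 : ((b - a).choose (k - a) : ℝ) ≠ 0 := by exact_mod_cast (Nat.choose_pos (by omega)).ne'
  field_simp
  linear_combination (n.choose b : ℝ) * h2 - (k.choose a : ℝ) * h1
section Band

variable [Fintype α]

lemma card_sigma_powersetCard (a b : ℕ) :
    #((powersetCard b (univ : Finset α)).sigma (powersetCard a)) =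
      (Fintype.card α).choose b * b.choose a := by
  rw [card_sigma, sum_congr rfl fun B₀ hB₀ => by rw [card_powersetCard, (mem_powersetCard.1 hB₀).2],
    sum_const, card_powersetCard, card_univ, smul_eq_mul]

variable [DecidableEq α]

lemma card_filter_sigma_powersetCard {a b : ℕ} {A : Finset α} (hb : #A ≤ b) :
    #{q ∈ (powersetCard b (univ : Finset α)).sigma (powersetCard a) | q.2 ⊆ A ∧ A ⊆ q.1} =
      (#A).choose a * (Fintype.card α - #A).choose (b - #A) := by
  rw [← card_powersetCard, ← card_compl, ← card_powersetCard, ← card_product]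
  refine card_nbij' (fun q => (q.2, q.1 \ A)) (fun p => ⟨A ∪ p.2, p.1⟩) (fun q hq => ?_)
    (fun p hp => ?_) (fun q hq => ?_) (fun p hp => ?_)
  · simp only [coe_filter, mem_sigma, mem_powersetCard, subset_univ, true_and,
      Set.mem_ofPred_eq] at hq
    obtain ⟨⟨hB₀, -, hA₀⟩, hA₀A, hAB₀⟩ := hq
    simp only [coe_product, Set.mem_prod, mem_coe, mem_powersetCard]
    refine ⟨⟨hA₀A, hA₀⟩, fun x hx => mem_compl.2 (mem_sdiff.1 hx).2, ?_⟩
    rw [card_sdiff_of_subset hAB₀, hB₀]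
  · simp only [coe_product, Set.mem_prod, mem_coe, mem_powersetCard] at hp
    obtain ⟨⟨hA₀A, hA₀⟩, hY, hYc⟩ := hp
    have hdisj : Disjoint A p.2 := disjoint_right.2 fun x hx => mem_compl.1 (hY hx)
    simp only [coe_filter, mem_sigma, mem_powersetCard, subset_univ, true_and, Set.mem_ofPred_eq]
    refine ⟨⟨?_, hA₀A.trans subset_union_left, hA₀⟩, hA₀A, subset_union_left⟩
    rw [card_union_of_disjoint hdisj, hYc]
    omega
  · obtain ⟨B₀, A₀⟩ := q
    simp only [coe_filter, Set.mem_ofPred_eq] at hq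
    simp [union_sdiff_of_subset hq.2.2]
  · simp only [coe_product, Set.mem_prod, mem_coe, mem_powersetCard] at hp
    exact Prod.ext rfl
      (union_sdiff_cancel_left (disjoint_right.2 fun x hx => mem_compl.1 (hp.2.1 hx)))

lemma lubellSum_band_le {F : Finset (Finset α)} {a b : ℕ} (hab : a ≤ b)
    (hbn : b ≤ Fintype.card α) {c : ℝ}
    (hc : ∀ A₀ B₀ : Finset α, A₀ ⊆ B₀ → #A₀ = a → #B₀ = b →
      ∑ A ∈ F with A₀ ⊆ A ∧ A ⊆ B₀, ((b - a).choose (#A - a) : ℝ)⁻¹ ≤ c) :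
    lubellSum {A ∈ F | a ≤ #A ∧ #A ≤ b} ≤ c := by
  set P := (powersetCard b (univ : Finset α)).sigma (powersetCard a)
  set G := {A ∈ F | a ≤ #A ∧ #A ≤ b}
  have hT : (0 : ℝ) < (Fintype.card α).choose b * b.choose a := by
    have := Nat.choose_pos hbn; have := Nat.choose_pos hab; positivity
  have hdouble : ∑ q ∈ P, ∑ A ∈ G with q.2 ⊆ A ∧ A ⊆ q.1, ((b - a).choose (#A - a) : ℝ)⁻¹ =
      (Fintype.card α).choose b * b.choose a * lubellSum G := by
    rw [sum_comm' (t' := G) (s' := fun A => {q ∈ P | q.2 ⊆ A ∧ A ⊆ q.1})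
      (by simp only [mem_filter]; tauto), lubellSum, mul_sum]
    refine sum_congr rfl fun A hA => ?_
    obtain ⟨-, hak, hkb⟩ := mem_filter.1 hA
    rw [sum_const, card_filter_sigma_powersetCard hkb, nsmul_eq_mul, Nat.cast_mul]
    exact choose_mul_choose_mul_inv_choose hak hkb hbn
  have hinterval : ∀ q ∈ P, ∑ A ∈ G with q.2 ⊆ A ∧ A ⊆ q.1, ((b - a).choose (#A - a) : ℝ)⁻¹ ≤ c :=
    fun q hq => by
      obtain ⟨⟨-, hB₀⟩, hA₀B₀, hA₀⟩ := by simpa only [P, mem_sigma, mem_powersetCard] using hq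
      rw [filter_filter, filter_congr fun A _ => ⟨fun h => h.2,
        fun h => ⟨⟨hA₀ ▸ card_le_card h.1, hB₀ ▸ card_le_card h.2⟩, h⟩⟩]
      exact hc _ _ hA₀B₀ hA₀ hB₀
  have := sum_le_sum hinterval
  rw [hdouble, sum_const, card_sigma_powersetCard, nsmul_eq_mul, Nat.cast_mul] at this
  exact le_of_mul_le_mul_left (by linarith) hT

end Band


theorem lubell_band_bound_general (n d a b : ℕ) (hd : 1 ≤ d) (hab : a ≤ b) (hbn : b ≤ n)
    (F : Finset (Finset (Fin n))) (hF : ¬ ContainsBD n d F) :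
    lubell n (F.filter (fun A => a ≤ A.card ∧ A.card ≤ b)) ≤ alpha (b - a) d := by
  have h := lubellSum_band_le (F := F) hab (by simpa using hbn) fun A₀ B₀ h hA₀ hB₀ => by
    simpa [hA₀, hB₀] using sum_interval_le_alpha hd hF h
  simpa [lubell, lubellSum] using h

theorem lubell_band_bound (n d a b : ℕ) (hd : 1 ≤ d) (hab : a ≤ b) (hbn : b ≤ n)
    (hgap : d ≤ b - a) (F : Finset (Finset (Fin n))) (hF : ¬ ContainsBD n d F) :
    lubell n (F.filter (fun A => a ≤ A.card ∧ A.card ≤ b)) ≤ alpha (b - a) d :=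
  lubell_band_bound_general n d a b hd hab hbn F hF
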